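/- arXiv:2102.12264 — 4 statements merged into one kernel-verified Lean document; each statement's English description precedes it below -/
import Mathlib

section
/- Let A be an n×n matrix over the extended reals EReal. The following are equivalent: (i) G(A) ∈ Γ, i.e. (A^k)_{ii} ≤ 0 for every index i and every integer k ≥ 1; (ii) (A^*)_{ii} = 0 for every index i; (iii) (A^*)_{ii} ≠ +∞ for every index i. -/
open scoped Classical

namespace NCP

/-- Square max-plus matrices over the extended reals. -/
abbrev MPMat (n : ℕ) := Fin n → Fin n → EReal

/-- Max-plus matrix product: `(A ⊗ B) i j = ⨆ k, A i k + B k j`. -/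
noncomputable def mpMul {n : ℕ} (A B : MPMat n) : MPMat n :=
  fun i j => ⨆ k : Fin n, A i k + B k j

/-- Max-plus identity matrix `E_⊗`. -/
noncomputable def mpId {n : ℕ} : MPMat n :=
  fun i j => if i = j then 0 else ⊥

/-- Max-plus matrix powers. -/
noncomputable def mpPow {n : ℕ} (A : MPMat n) : ℕ → MPMat n
  | 0 => mpId
  | k + 1 => mpMul A (mpPow A k)

/-- Entrywise Kleene star `(A^*) i j = ⨆ k, (A^k) i j`. -/
noncomputable def mpStar {n : ℕ} (A : MPMat n) : MPMat n :=
  fun i j => ⨆ k : ℕ, mpPow A k i j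

/-- Entrywise max of two matrices, `A ⊕ B`. -/
noncomputable def mpAdd {n : ℕ} (A B : MPMat n) : MPMat n :=
  fun i j => max (A i j) (B i j)

/-- `G(A) ∈ Γ`: all diagonal entries of all positive powers are ≤ 0. -/
def InGamma {n : ℕ} (A : MPMat n) : Prop :=
  ∀ i : Fin n, ∀ k : ℕ, 1 ≤ k → mpPow A k i i ≤ 0

/-- `λA`: the matrix with entries `λ + A i j`. -/
noncomputable def sm {n : ℕ} (lam : ℝ) (A : MPMat n) : MPMat n :=
  fun i j => (lam : EReal) + A i j

/-- Division of an extended real by a natural number (±∞ map to ±∞). -/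
noncomputable def edivNat (x : EReal) (k : ℕ) : EReal :=
  if x = ⊤ then ⊤ else if x = ⊥ then ⊥ else ((x.toReal / k : ℝ) : EReal)

/-- The maximum circuit mean of a max-plus matrix. -/
noncomputable def mcm {n : ℕ} (M : MPMat n) : EReal :=
  ⨆ k ∈ Finset.Icc 1 n, ⨆ i : Fin n, edivNat (mpPow M k i i) k

/-- Morphism from words to max-plus matrices determined by `f` on letters. -/
noncomputable def wordMat {α : Type*} {n : ℕ} (f : α → MPMat n) : List α → MPMat n
  | [] => mpId
  | z :: s => mpMul (f z) (wordMat f s)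

/-- Entrywise extension of `wordMat` to languages: `μ(L) i j = ⨆ s ∈ L, μ(s) i j`. -/
noncomputable def langMat {α : Type*} {n : ℕ} (f : α → MPMat n) (L : Language α) : MPMat n :=
  fun i j => ⨆ s ∈ L, wordMat f s i j

/-- The recursive sequence of languages `S(L₁, L₂, k)`. -/
def SL {α : Type*} (L1 L2 : Language α) : ℕ → Language α
  | 0 => 1
  | k + 1 => L1 * SL L1 L2 k * SL L1 L2 k * L2 + L2 * SL L1 L2 k * SL L1 L2 k * L1 + 1

/-!
Concatenating circuits gives `(A^a)_{ik} + (A^b)_{kj} ≤ (A^{a+b})_{ij}`, so a circuit of positive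
weight `c = (A^k)_{ii}` yields `(A^{km})_{ii} ≥ m • c`, which is unbounded, so `(A^*)_{ii} = +∞`.
-/

theorem _root_.EReal.iSup_nsmul_eq_top {c : EReal} (hc : 0 < c) : ⨆ m : ℕ, m • c = ⊤ := by
  obtain ⟨r, hr, hrc⟩ := EReal.lt_iff_exists_real_btwn.1 hc
  refine iSup_eq_top.2 fun b hb => ?_
  obtain ⟨x, hbx, -⟩ := EReal.lt_iff_exists_real_btwn.1 hb
  obtain ⟨m, hm⟩ := exists_lt_nsmul (EReal.coe_pos.1 hr) x
  refine ⟨m, hbx.trans ?_⟩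
  calc (x : EReal) < (m • r : ℝ) := EReal.coe_lt_coe_iff.2 hm
    _ = m • (r : EReal) := EReal.coe_nsmul m r
    _ ≤ m • c := nsmul_le_nsmul_right hrc.le m

section

variable {n : ℕ} (A : MPMat n)

theorem mpPow_zero_apply_self (i : Fin n) : mpPow A 0 i i = 0 := by
  simp [mpPow, mpId]

theorem mpPow_apply_le_mpStar (k : ℕ) (i j : Fin n) : mpPow A k i j ≤ mpStar A i j :=
  le_iSup (fun k => mpPow A k i j) k

theorem mpPow_add_mpPow_le (a b : ℕ) (i k j : Fin n) :
    mpPow A a i k + mpPow A b k j ≤ mpPow A (a + b) i j := by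
  induction a generalizing i with
  | zero =>
    by_cases h : i = k
    · subst h; simp [mpPow, mpId]
    · simp [mpPow, mpId, h]
  | succ a ih =>
    have : Nonempty (Fin n) := ⟨i⟩
    obtain ⟨l, hl⟩ := exists_eq_ciSup_of_finite (f := fun l => A i l + mpPow A a l k)
    calc mpPow A (a + 1) i k + mpPow A b k j = A i l + mpPow A a l k + mpPow A b k j := by
          rw [hl]; rfl
      _ ≤ A i l + mpPow A (a + b) l j := by rw [add_assoc]; exact add_le_add_right (ih l) _
      _ ≤ mpPow A (a + b + 1) i j := le_iSup (fun l => A i l + mpPow A (a + b) l j) l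
      _ = mpPow A (a + 1 + b) i j := by rw [Nat.add_right_comm]

theorem nsmul_mpPow_apply_self_le (k m : ℕ) (i : Fin n) :
    m • mpPow A k i i ≤ mpPow A (k * m) i i := by
  induction m with
  | zero => simp [mpPow_zero_apply_self]
  | succ m ih =>
    calc (m + 1) • mpPow A k i i = m • mpPow A k i i + mpPow A k i i := succ_nsmul _ m
      _ ≤ mpPow A (k * m) i i + mpPow A k i i := add_le_add_left ih _
      _ ≤ mpPow A (k * (m + 1)) i i := mpPow_add_mpPow_le A _ _ i i i

theorem mpStar_apply_self_eq_top_of_pos {k : ℕ} {i : Fin n} (h : 0 < mpPow A k i i) :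
    mpStar A i i = ⊤ :=
  top_unique <| (EReal.iSup_nsmul_eq_top h).ge.trans <| iSup_le fun m =>
    (nsmul_mpPow_apply_self_le A k m i).trans (mpPow_apply_le_mpStar A _ i i)

theorem mpStar_apply_self_eq_zero {A : MPMat n} (h : InGamma A) (i : Fin n) :
    mpStar A i i = 0 := by
  refine le_antisymm (iSup_le fun k => ?_) ((mpPow_zero_apply_self A i).ge.trans
    (mpPow_apply_le_mpStar A 0 i i))
  cases k with
  | zero => exact (mpPow_zero_apply_self A i).le
  | succ k => exact h i (k + 1) k.succ_pos

theorem inGamma_of_mpStar_apply_self_ne_top (h : ∀ i, mpStar A i i ≠ ⊤) : InGamma A :=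
  fun i _ _ => not_lt.1 fun hpos => h i (mpStar_apply_self_eq_top_of_pos A hpos)

end

/-- for any EReal matrix `A`, the following are equivalent:
`G(A) ∈ Γ`; all diagonal entries of `A^*` equal `0`; no diagonal entry of `A^*` is `+∞`. -/
theorem stmt2 {n : ℕ} (A : MPMat n) :
    (InGamma A ↔ ∀ i : Fin n, mpStar A i i = 0) ∧
    (InGamma A ↔ ∀ i : Fin n, mpStar A i i ≠ ⊤) := by
  have zero_of_inGamma : InGamma A → ∀ i, mpStar A i i = 0 := mpStar_apply_self_eq_zero
  have ne_top_of_zero : (∀ i, mpStar A i i = 0) → ∀ i, mpStar A i i ≠ ⊤ :=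
    fun h i => (h i).symm ▸ EReal.zero_ne_top
  have inGamma_of_ne_top := inGamma_of_mpStar_apply_self_ne_top A
  exact ⟨⟨zero_of_inGamma, inGamma_of_ne_top ∘ ne_top_of_zero⟩,
    ⟨ne_top_of_zero ∘ zero_of_inGamma, inGamma_of_ne_top⟩⟩

end NCP
end

section
/- Let A be an n×n matrix with entries in ℝ ∪ {-∞} and let λ ∈ ℝ. Then G(λA) ∈ Γ if and only if λ ≤ -mcm(A) (an inequality of extended reals, where -(-∞) = +∞), and G(λ^{-1}A) ∈ Γ if and only if λ ≥ mcm(A). -/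
open scoped Classical

namespace NCP

/-!
Adding `λ` to every entry adds `kλ` to every walk of length `k`, so `G(λA) ∈ Γ` says that every
closed walk has mean weight at most `-λ`, while `mcm A ≤ -λ` says this only for closed walks of
length at most `n`. A longer closed walk revisits a vertex within its first `n` steps; cutting out
that cycle (of length `≤ n`) leaves a shorter closed walk, so by induction its weight is a sum of
weights of short cycles. Since `(A^k)ᵢᵢ` is a finite maximum, it is the weight of some closed walk.
-/

section Walks

variable {n : ℕ} (B : MPMat n)

noncomputable def walkWeight (p : ℕ → Fin n) (k : ℕ) : EReal :=
  ∑ t ∈ Finset.range k, B (p t) (p (t + 1))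

theorem walkWeight_add (p : ℕ → Fin n) (a r : ℕ) :
    walkWeight B p (a + r) = walkWeight B p a + walkWeight B (fun t => p (a + t)) r := by
  simp only [walkWeight, Finset.sum_range_add, add_assoc]

theorem walkWeight_le_mpPow (k : ℕ) (p : ℕ → Fin n) :
    walkWeight B p k ≤ mpPow B k (p 0) (p k) := by
  induction k generalizing p with
  | zero => simp [walkWeight, mpPow, mpId]
  | succ k ih =>
    calc walkWeight B p (k + 1) = B (p 0) (p 1) + walkWeight B (fun t => p (t + 1)) k := by
          rw [walkWeight, Finset.sum_range_succ', add_comm]; rfl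
      _ ≤ B (p 0) (p 1) + mpPow B k (p 1) (p (k + 1)) := add_le_add_right (ih _) _
      _ ≤ mpPow B (k + 1) (p 0) (p (k + 1)) :=
          le_iSup (fun l => B (p 0) l + mpPow B k l (p (k + 1))) (p 1)

theorem exists_walkWeight_eq_mpPow (k : ℕ) (i j : Fin n) (h : mpPow B k i j ≠ ⊥) :
    ∃ p : ℕ → Fin n, p 0 = i ∧ p k = j ∧ walkWeight B p k = mpPow B k i j := by
  induction k generalizing i with
  | zero =>
    by_cases hij : i = j
    · exact ⟨fun _ => i, rfl, hij, by simp [walkWeight, mpPow, mpId, hij]⟩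
    · simp [mpPow, mpId, hij] at h
  | succ k ih =>
    have : Nonempty (Fin n) := ⟨i⟩
    obtain ⟨l, hl⟩ := exists_eq_ciSup_of_finite (f := fun l => B i l + mpPow B k l j)
    have hsucc : mpPow B (k + 1) i j = B i l + mpPow B k l j := hl.symm
    obtain ⟨q, hq0, hqk, hq⟩ := ih l (fun hbot => h (by rw [hsucc, hbot, EReal.add_bot]))
    refine ⟨fun | 0 => i | t + 1 => q t, rfl, hqk, ?_⟩
    rw [hsucc, walkWeight, Finset.sum_range_succ', add_comm, ← hq, ← hq0]
    rfl

theorem walkWeight_cut_cycle (p : ℕ → Fin n) {a m : ℕ} (h : p (a + m) = p a) (r : ℕ) :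
    walkWeight B p (a + m + r) =
      walkWeight B (fun t => if t ≤ a then p t else p (t + m)) (a + r) +
        walkWeight B (fun t => p (a + t)) m := by
  set q : ℕ → Fin n := fun t => if t ≤ a then p t else p (t + m)
  have hq_init : walkWeight B q a = walkWeight B p a :=
    Finset.sum_congr rfl fun t ht => by
      have := Finset.mem_range.mp ht
      simp only [q, if_pos this.le, if_pos (Nat.succ_le_of_lt this)]
  have hq_tail : (fun t => q (a + t)) = fun t => p (a + m + t) := by
    funext t
    rcases Nat.eq_zero_or_pos t with rfl | ht
    · simp [q, h]
    · simp only [q, if_neg (by omega : ¬ a + t ≤ a)]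
      congr 1; omega
  rw [walkWeight_add B q, hq_init, hq_tail, walkWeight_add B p (a + m), walkWeight_add B p a,
    add_right_comm]

theorem exists_lt_le_apply_eq (p : ℕ → Fin n) : ∃ a b, a < b ∧ b ≤ n ∧ p a = p b := by
  obtain ⟨a, b, hne, heq⟩ :=
    Fintype.exists_ne_map_eq_of_card_lt (fun t : Fin (n + 1) => p t) (by simp)
  rcases lt_or_gt_of_ne hne with h | h
  · exact ⟨a, b, h, b.is_le, heq⟩
  · exact ⟨b, a, h, a.is_le, heq.symm⟩

theorem walkWeight_nonpos_of_closed (H : ∀ k, 1 ≤ k → k ≤ n → ∀ i, mpPow B k i i ≤ 0)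
    (k : ℕ) (p : ℕ → Fin n) (hk : 1 ≤ k) (hp : p k = p 0) : walkWeight B p k ≤ 0 := by
  induction k using Nat.strong_induction_on generalizing p with
  | _ k ih =>
  by_cases hkn : k ≤ n
  · calc walkWeight B p k ≤ mpPow B k (p 0) (p 0) := hp ▸ walkWeight_le_mpPow B k p
      _ ≤ 0 := H k hk hkn _
  obtain ⟨a, b, hab, hbn, hpab⟩ := exists_lt_le_apply_eq p
  obtain ⟨m, rfl⟩ : ∃ m, b = a + m := ⟨b - a, by omega⟩
  obtain ⟨r, rfl⟩ : ∃ r, k = a + m + r := ⟨k - (a + m), by omega⟩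
  rw [walkWeight_cut_cycle B p hpab.symm r]
  have hcut := ih (a + r) (by omega) (fun t => if t ≤ a then p t else p (t + m)) (by omega)
    (by simp only [if_neg (by omega : ¬ a + r ≤ a), if_pos (Nat.zero_le a), add_right_comm, hp])
  have hcycle := ih m (by omega) (fun t => p (a + t)) (by omega) (by simpa using hpab.symm)
  simpa using add_le_add hcut hcycle

theorem inGamma_iff_forall_mpPow_le_dim :
    InGamma B ↔ ∀ k, 1 ≤ k → k ≤ n → ∀ i, mpPow B k i i ≤ 0 := by
  refine ⟨fun h k hk _ i => h i k hk, fun H i k hk => ?_⟩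
  rcases eq_or_ne (mpPow B k i i) ⊥ with hbot | hbot
  · simp [hbot]
  obtain ⟨p, hp0, hpk, hp⟩ := exists_walkWeight_eq_mpPow B k i i hbot
  exact hp ▸ walkWeight_nonpos_of_closed B H k p hk (hpk.trans hp0.symm)

end Walks

theorem galoisConnection_coe_add (c : ℝ) :
    GaloisConnection (fun x : EReal => (c : EReal) + x) (fun y => y - c) := fun x y => by
  change (c : EReal) + x ≤ y ↔ x ≤ y - c
  rw [add_comm]
  exact (EReal.le_sub_iff_add_le (.inl (EReal.coe_ne_bot c)) (.inl (EReal.coe_ne_top c))).symm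

theorem mpPow_sm {n : ℕ} (c : ℝ) (A : MPMat n) (k : ℕ) (i j : Fin n) :
    mpPow (sm c A) k i j = ((k * c : ℝ) : EReal) + mpPow A k i j := by
  induction k generalizing i j with
  | zero => simp [mpPow]
  | succ k ih =>
    have hterm : ∀ l, sm c A i l + mpPow (sm c A) k l j =
        (((k + 1 : ℕ) * c : ℝ) : EReal) + (A i l + mpPow A k l j) := fun l => by
      rw [ih, sm, add_add_add_comm, ← EReal.coe_add]
      congr 2
      push_cast
      ring
    simp only [mpPow, mpMul, hterm]
    exact ((galoisConnection_coe_add _).l_iSup).symm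

theorem edivNat_le_coe_iff {k : ℕ} (hk : 0 < k) (x : EReal) (c : ℝ) :
    edivNat x k ≤ c ↔ x ≤ ((k * c : ℝ) : EReal) := by
  induction x with
  | bot => simp [edivNat]
  | top => simp only [edivNat, if_true, top_le_iff, EReal.coe_ne_top]
  | coe x =>
    simp only [edivNat, EReal.coe_ne_top, EReal.coe_ne_bot, if_false, EReal.toReal_coe,
      EReal.coe_le_coe_iff]
    rw [div_le_iff₀ (by exact_mod_cast hk), mul_comm]

theorem mcm_le_iff {n : ℕ} (A : MPMat n) (C : EReal) :
    mcm A ≤ C ↔ ∀ k, 1 ≤ k → k ≤ n → ∀ i, edivNat (mpPow A k i i) k ≤ C := by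
  simp only [mcm, iSup_le_iff, Finset.mem_Icc, and_imp]

theorem inGamma_sm_iff {n : ℕ} (c : ℝ) (A : MPMat n) :
    InGamma (sm c A) ↔ mcm A ≤ ((-c : ℝ) : EReal) := by
  rw [inGamma_iff_forall_mpPow_le_dim, mcm_le_iff]
  refine forall₄_congr fun k hk _ i => ?_
  rw [edivNat_le_coe_iff hk, mpPow_sm, galoisConnection_coe_add]
  dsimp only
  rw [zero_sub, ← EReal.coe_neg, mul_neg]

theorem stmt6_general {n : ℕ} (A : MPMat n) (lam : ℝ) :
    (InGamma (sm lam A) ↔ (lam : EReal) ≤ -mcm A) ∧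
    (InGamma (sm (-lam) A) ↔ mcm A ≤ (lam : EReal)) := by
  rw [inGamma_sm_iff, inGamma_sm_iff, EReal.coe_neg, EReal.le_neg, neg_neg]
  exact ⟨Iff.rfl, Iff.rfl⟩

/-- for a matrix with no `+∞` entry and real `λ`:
`G(λA) ∈ Γ ↔ λ ≤ -mcm(A)` and `G(λ⁻¹A) ∈ Γ ↔ λ ≥ mcm(A)`. -/
theorem stmt6 {n : ℕ} (A : MPMat n) (hA : ∀ i j, A i j ≠ ⊤) (lam : ℝ) :
    (InGamma (sm lam A) ↔ (lam : EReal) ≤ -mcm A) ∧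
    (InGamma (sm (-lam) A) ↔ mcm A ≤ (lam : EReal)) :=
  stmt6_general A lam

end NCP
end

section
/- For every k ∈ ℕ, the language S({a}, {b}, ⌊k/2⌋)^* (the Kleene star of S({a}, {b}, ⌊k/2⌋)) over the two-letter alphabet {a, b} contains every balanced binary string of length at most k. -/
open scoped Classical

namespace NCP

/-- A binary string (over the alphabet `{a, b}`, encoded as `{true, false}`) is
balanced if it has equally many occurrences of each letter. -/
def Balanced (s : List Bool) : Prop := s.count true = s.count false

/-- `x*x`-balanced: balanced and (empty or first letter = last letter). -/
def XXBal (s : List Bool) : Prop := Balanced s ∧ (s = [] ∨ s.head? = s.getLast?)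

/-- `x*y`-balanced: balanced and (empty or first letter ≠ last letter). -/
def XYBal (s : List Bool) : Prop := Balanced s ∧ (s = [] ∨ s.head? ≠ s.getLast?)

/-!
An `xy`-balanced word `x m y` (`y ≠ x`, `m` balanced) of length `≤ 2j` lies in `S(a, b, j)`
as soon as `m` lies in `S(a, b, j - 1)²`, and every balanced word is the concatenation of two
`xy`-balanced words: if `w = x ⋯ x`, cut `w` just before the first letter at which the surplus
of `x` over the other letter becomes negative. By induction on `j`, every balanced word of
length `≤ 2j` lies in `S(a, b, j)² ⊆ S(a, b, j)^*`, and balanced words have even length.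
-/

section SL

variable {α : Type*} (L1 L2 : Language α)

theorem nil_mem_SL (k : ℕ) : [] ∈ SL L1 L2 k := by
  cases k with
  | zero => exact (Language.mem_one _).mpr rfl
  | succ k => exact Or.inr ((Language.mem_one _).mpr rfl)

variable {L1 L2}

theorem append_mem_SL_succ_left {k : ℕ} {a m b : List α} (ha : a ∈ L1)
    (hm : m ∈ SL L1 L2 k * SL L1 L2 k) (hb : b ∈ L2) : a ++ m ++ b ∈ SL L1 L2 (k + 1) := by
  obtain ⟨u, hu, v, hv, rfl⟩ := Language.mem_mul.mp hm
  refine (Language.mem_add _ _ _).mpr (Or.inl ((Language.mem_add _ _ _).mpr (Or.inl ?_)))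
  simpa only [List.append_assoc] using
    Language.append_mem_mul (Language.append_mem_mul (Language.append_mem_mul ha hu) hv) hb

theorem append_mem_SL_succ_right {k : ℕ} {a m b : List α} (ha : a ∈ L2)
    (hm : m ∈ SL L1 L2 k * SL L1 L2 k) (hb : b ∈ L1) : a ++ m ++ b ∈ SL L1 L2 (k + 1) := by
  obtain ⟨u, hu, v, hv, rfl⟩ := Language.mem_mul.mp hm
  refine (Language.mem_add _ _ _).mpr (Or.inl ((Language.mem_add _ _ _).mpr (Or.inr ?_)))
  simpa only [List.append_assoc] using
    Language.append_mem_mul (Language.append_mem_mul (Language.append_mem_mul ha hu) hv) hb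

end SL

theorem Balanced.length_eq_two_mul_count {s : List Bool} (hs : Balanced s) : s.length = 2 * s.count true := by
  have := List.count_true_add_count_false s
  unfold Balanced at hs
  omega

theorem balanced_cons_append_singleton (x : Bool) (m : List Bool) :
    Balanced (x :: (m ++ [!x])) ↔ Balanced m := by
  cases x <;> simp [Balanced, List.count_append]

def excess (x : Bool) (w : List Bool) : ℤ := w.count x - w.count !x

theorem excess_append (x : Bool) (u v : List Bool) :
    excess x (u ++ v) = excess x u + excess x v := by
  simp only [excess, List.count_append]; push_cast; ring

theorem excess_cons (x y : Bool) (w : List Bool) :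
    excess x (y :: w) = excess x [y] + excess x w :=
  excess_append x [y] w

theorem excess_singleton_eq_neg_one_iff (x y : Bool) : excess x [y] = -1 ↔ y = !x := by
  cases x <;> cases y <;> decide

theorem balanced_iff_excess_eq_zero (x : Bool) (w : List Bool) : Balanced w ↔ excess x w = 0 := by
  cases x <;> simp only [Balanced, excess, Bool.not_true, Bool.not_false] <;> omega

/-- `c` is the surplus accumulated before `w`; the cut is made at the first letter that takes
it below `0`. -/
theorem exists_eq_append_not_cons (x : Bool) :
    ∀ (w : List Bool) (c : ℤ), 0 ≤ c → c + excess x w < 0 →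
      ∃ a b, w = a ++ (!x) :: b ∧ c + excess x a = 0 ∧ (a = [] ∨ a.getLast? = some !x)
  | [], c, hc, hw => by simp [excess] at hw; omega
  | y :: t, c, hc, hw => by
    by_cases hstop : c = 0 ∧ y = !x
    · obtain ⟨rfl, rfl⟩ := hstop
      exact ⟨[], t, rfl, by simp [excess], Or.inl rfl⟩
    have hy : excess x [y] = 1 ∨ excess x [y] = -1 := by cases x <;> cases y <;> decide
    have hc' : 0 ≤ c + excess x [y] := by
      rcases hy with hy | hy
      · omega
      · have hc0 : c ≠ 0 := fun h => hstop ⟨h, (excess_singleton_eq_neg_one_iff x y).mp hy⟩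
        omega
    rw [excess_cons] at hw
    obtain ⟨a, b, rfl, ha, hlast⟩ :=
      exists_eq_append_not_cons x t (c + excess x [y]) hc' (by linarith)
    refine ⟨y :: a, b, rfl, by rw [excess_cons]; linarith, Or.inr ?_⟩
    rcases hlast with rfl | hlast
    · have : excess x [y] = -1 := by
        rw [show excess x [] = 0 by simp [excess]] at ha
        omega
      simp [(excess_singleton_eq_neg_one_iff x y).mp this]
    · simp [List.getLast?_cons, hlast]

theorem getLast?_cons_append_singleton {α : Type*} (x y : α) (m : List α) :
    (x :: (m ++ [y])).getLast? = some y := by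
  rw [← List.cons_append, List.getLast?_concat]

theorem XYBal.eq_nil_or_eq_cons_append {s : List Bool} (hs : XYBal s) :
    s = [] ∨ ∃ x m, Balanced m ∧ s = x :: (m ++ [!x]) := by
  obtain ⟨hbal, _ | hends⟩ := hs
  · exact Or.inl ‹_›
  rcases s with _ | ⟨x, t⟩
  · exact Or.inl rfl
  rcases List.eq_nil_or_concat t with rfl | ⟨m, y, rfl⟩
  · exact absurd rfl hends
  rw [List.concat_eq_append] at hbal hends ⊢
  have hy : y = !x := by
    rw [getLast?_cons_append_singleton] at hends
    revert hends; cases x <;> cases y <;> simp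
  subst hy
  exact Or.inr ⟨x, m, (balanced_cons_append_singleton x m).mp hbal, rfl⟩

theorem Balanced.exists_eq_append_xyBal {w : List Bool} (hw : Balanced w) :
    ∃ u v, w = u ++ v ∧ XYBal u ∧ XYBal v := by
  rcases w with _ | ⟨x, t⟩
  · exact ⟨[], [], rfl, ⟨hw, Or.inl rfl⟩, ⟨hw, Or.inl rfl⟩⟩
  have hnil : XYBal [] := ⟨rfl, Or.inl rfl⟩
  by_cases hlast : (x :: t).getLast? = some x
  swap
  · exact ⟨x :: t, [], by simp, ⟨hw, Or.inr (Ne.symm hlast)⟩, hnil⟩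
  obtain ⟨w', hw'⟩ := List.getLast?_eq_some_iff.mp hlast
  have hexcess : excess x (x :: t) = 0 := (balanced_iff_excess_eq_zero x _).mp hw
  have hx : excess x [x] = 1 := by simp [excess]
  rw [hw', excess_append, hx] at hexcess
  obtain ⟨a, b, rfl, ha, ha_last⟩ := exists_eq_append_not_cons x w' 0 le_rfl (by omega)
  rw [zero_add] at ha
  refine ⟨a, (!x) :: b ++ [x], by simp [hw'], ⟨(balanced_iff_excess_eq_zero x a).mpr ha, ?_⟩,
    ⟨(balanced_iff_excess_eq_zero x _).mpr ?_, Or.inr (by simp [getLast?_cons_append_singleton])⟩⟩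
  · rcases ha_last with rfl | ha_last
    · exact Or.inl rfl
    have ha_head : a.head? = some x := by
      have := congrArg List.head? hw'
      rcases a with _ | ⟨y, a⟩
      · simp at ha_last
      · simpa using this.symm
    exact Or.inr (by simp [ha_head, ha_last])
  · rw [excess_append, excess_cons] at hexcess
    rw [excess_append, excess_cons, hx]
    omega

theorem mem_mul_self_of_balanced {L : Language Bool} {n : ℕ}
    (hL : ∀ s, XYBal s → s.length ≤ n → s ∈ L) {w : List Bool} (hw : Balanced w)
    (hlen : w.length ≤ n) : w ∈ L * L := by
  obtain ⟨u, v, rfl, hu, hv⟩ := hw.exists_eq_append_xyBal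
  rw [List.length_append] at hlen
  exact Language.append_mem_mul (hL u hu (by omega)) (hL v hv (by omega))

theorem cons_append_not_mem_SL_succ (x : Bool) {k : ℕ} {m : List Bool}
    (hm : m ∈ SL {[true]} {[false]} k * SL {[true]} {[false]} k) :
    x :: (m ++ [!x]) ∈ SL {[true]} {[false]} (k + 1) := by
  cases x
  · exact append_mem_SL_succ_right (a := [false]) rfl hm rfl
  · exact append_mem_SL_succ_left (a := [true]) rfl hm rfl

theorem XYBal.mem_SL {s : List Bool} (hs : XYBal s) {k : ℕ} (hlen : s.length ≤ 2 * k) :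
    s ∈ SL {[true]} {[false]} k := by
  induction k generalizing s with
  | zero => exact (Language.mem_one s).mpr (List.eq_nil_of_length_eq_zero (by omega))
  | succ k ih =>
    rcases hs.eq_nil_or_eq_cons_append with rfl | ⟨x, m, hm, rfl⟩
    · exact nil_mem_SL _ _ _
    simp only [List.length_cons, List.length_append] at hlen
    exact cons_append_not_mem_SL_succ x
      (mem_mul_self_of_balanced (fun _ hs hlen => ih hs hlen) hm (by omega))

/-- the Kleene star of `S({a}, {b}, ⌊k/2⌋)` contains every balanced
binary string of length at most `k`. -/
theorem stmt13 (k : ℕ) (s : List Bool) (hs : Balanced s) (hlen : s.length ≤ k) :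
    s ∈ KStar.kstar (SL ({[true]} : Language Bool) ({[false]} : Language Bool) (k / 2)) := by
  have hlen' : s.length ≤ 2 * (k / 2) := by
    have := hs.length_eq_two_mul_count
    omega
  have hmem := mem_mul_self_of_balanced (fun t ht => ht.mem_SL) hs hlen'
  exact (mul_le_mul_right le_kstar _).trans mul_kstar_le_kstar (α := Language Bool) hmem

end NCP
end

section
/- Let P, I be n×n matrices with entries in ℝ ∪ {-∞} such that P_{jj} ≠ -∞ for every index j, and let L ⊆ {p, i}^* be any language. Then G(μ({p} ∪ L)) ∈ Γ if and only if G(μ({p} · L^*)) ∈ Γ. -/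
/-!
Since `μ(M)^k = μ(M^k)`, the condition `G(μ(M)) ∈ Γ` says that no word of `M∗` has a
positive diagonal entry. With `B = {p} L∗` we have `B∗ ≤ ({p} + L)∗ ≤ L∗ + L∗ B∗ B`, and the
first inclusion gives one direction. For the other, a word `s ∈ L∗` with `μ(s)ᵢᵢ > 0` is
pumped: `p sᴺ ∈ B` and `μ(p sᴺ)ᵢᵢ ≥ Pᵢᵢ + N μ(s)ᵢᵢ > 0` for large `N`, as `Pᵢᵢ > -∞`.
A word `x y` has a positive diagonal entry iff its rotation `y x` has one, and rotating
`L∗ B∗ B` lands in `B L∗ B∗ ≤ B∗`.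
-/

open scoped Classical

namespace NCP

/-- The morphism on the two-letter alphabet `{p, i}` (encoded as `{true, false}`)
sending `p` to `P` and `i` to `I`. -/
noncomputable def mu2 {n : ℕ} (P I : MPMat n) : Bool → MPMat n :=
  fun z => if z then P else I

end NCP

open scoped Computability

namespace EReal

theorem iSup_add {ι : Sort*} (f : ι → EReal) (a : EReal) :
    (⨆ i, f i) + a = ⨆ i, f i + a := by
  refine le_antisymm (add_le_of_forall_lt fun b hb c hc => ?_)
    (iSup_le fun i => by gcongr; exact le_iSup f i)
  obtain ⟨i, hi⟩ := lt_iSup_iff.mp hb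
  exact (add_le_add hi.le hc.le).trans (le_iSup (fun i => f i + a) i)

theorem add_iSup {ι : Sort*} (a : EReal) (f : ι → EReal) :
    a + ⨆ i, f i = ⨆ i, a + f i := by
  simp only [add_comm a, iSup_add]

theorem exists_add_nsmul_pos {c x : EReal} (hc : c ≠ ⊥) (hx : 0 < x) :
    ∃ N : ℕ, 0 < c + N • x := by
  obtain ⟨q, -, hq⟩ := lt_iff_exists_real_btwn.mp (bot_lt_iff_ne_bot.mpr hc)
  obtain ⟨r, hr₀, hrx⟩ := lt_iff_exists_real_btwn.mp hx
  obtain ⟨N, hN⟩ := exists_nat_gt (-q / r)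
  have hr : 0 < r := EReal.coe_pos.mp hr₀
  refine ⟨N, lt_of_lt_of_le ?_ (add_le_add hq.le (nsmul_le_nsmul_right hrx.le N))⟩
  rw [← coe_nsmul, ← coe_add, EReal.coe_pos, _root_.nsmul_eq_mul]
  have := (div_lt_iff₀ hr).mp hN
  linarith

end EReal

section KleeneAlgebra

variable {K : Type*} [KleeneAlgebra K]

theorem kstar_mul_kstar_le_kstar_add (a b : K) : (a * b∗)∗ ≤ (a + b)∗ := by
  have hab : a * b∗ ≤ (a + b)∗ := by
    calc a * b∗ ≤ (a + b)∗ * (a + b)∗ :=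
          mul_le_mul' (le_add_right le_rfl |>.trans le_kstar) (kstar_mono le_add_self)
      _ = (a + b)∗ := kstar_mul_kstar _
  simpa only [kstar_idem] using kstar_mono hab

theorem kstar_add_le (a b : K) : (a + b)∗ ≤ b∗ + b∗ * (a * b∗)∗ * (a * b∗) := by
  have hone : 1 ≤ b∗ * (a * b∗)∗ := by
    simpa only [mul_one] using mul_le_mul' (one_le_kstar (a := b)) (one_le_kstar (a := a * b∗))
  have hstep : (a + b) * (b∗ * (a * b∗)∗) ≤ b∗ * (a * b∗)∗ := by
    rw [add_mul]
    refine add_le ?_ ?_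
    · calc a * (b∗ * (a * b∗)∗) = a * b∗ * (a * b∗)∗ := (mul_assoc _ _ _).symm
        _ ≤ (a * b∗)∗ := mul_kstar_le_kstar
        _ ≤ b∗ * (a * b∗)∗ := le_mul_of_one_le_left' one_le_kstar
    · rw [← mul_assoc]
      exact mul_le_mul' mul_kstar_le_kstar le_rfl
  calc (a + b)∗ ≤ b∗ * (a * b∗)∗ := kstar_le_of_mul_le_right hone hstep
    _ = b∗ + b∗ * (a * b∗)∗ * (a * b∗) := by
      conv_lhs => rw [← one_add_kstar_mul (a := a * b∗)]
      rw [mul_add, mul_one, mul_assoc]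

end KleeneAlgebra

namespace NCP

variable {n : ℕ} {α : Type*}

theorem mpMul_assoc (A B C : MPMat n) : mpMul (mpMul A B) C = mpMul A (mpMul B C) := by
  funext i j
  simp only [mpMul, EReal.iSup_add, EReal.add_iSup, add_assoc]
  exact iSup_comm

theorem mpId_mul (A : MPMat n) : mpMul mpId A = A := by
  funext i j
  refine le_antisymm (iSup_le fun k => ?_) (le_iSup_of_le i (by simp [mpId]))
  by_cases h : i = k
  · subst h; simp [mpId]
  · simp [mpId, h]

theorem mpMul_id (A : MPMat n) : mpMul A mpId = A := by
  funext i j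
  refine le_antisymm (iSup_le fun k => ?_) (le_iSup_of_le j (by simp [mpId]))
  by_cases h : k = j
  · subst h; simp [mpId]
  · simp [mpId, h]

theorem wordMat_singleton (f : α → MPMat n) (z : α) : wordMat f [z] = f z :=
  mpMul_id (f z)

theorem wordMat_append (f : α → MPMat n) (s t : List α) :
    wordMat f (s ++ t) = mpMul (wordMat f s) (wordMat f t) := by
  induction s with
  | nil => exact (mpId_mul _).symm
  | cons z s ih => simp only [List.cons_append, wordMat, ih, mpMul_assoc]

theorem diag_add_le_wordMat_append (f : α → MPMat n) (s t : List α) (i : Fin n) :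
    wordMat f s i i + wordMat f t i i ≤ wordMat f (s ++ t) i i := by
  rw [wordMat_append]
  exact le_iSup (fun k => wordMat f s i k + wordMat f t k i) i

theorem nsmul_diag_le_wordMat_flatten_replicate (f : α → MPMat n) (s : List α) (i : Fin n)
    (N : ℕ) : N • wordMat f s i i ≤ wordMat f (List.replicate N s).flatten i i := by
  induction N with
  | zero => simp [wordMat, mpId]
  | succ N ih =>
    rw [succ_nsmul', List.replicate_succ, List.flatten_cons]
    exact (add_le_add le_rfl ih).trans (diag_add_le_wordMat_append f _ _ i)

theorem exists_diag_pos_append_swap (f : α → MPMat n) {s t : List α} {i : Fin n}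
    (h : 0 < wordMat f (s ++ t) i i) : ∃ j, 0 < wordMat f (t ++ s) j j := by
  rw [wordMat_append] at h
  obtain ⟨j, hj⟩ := lt_iSup_iff.mp h
  refine ⟨j, hj.trans_le ?_⟩
  rw [add_comm, wordMat_append]
  exact le_iSup (fun k => wordMat f t j k + wordMat f s k j) i

theorem langMat_one (f : α → MPMat n) : langMat f 1 = mpId := by
  funext i j
  simp [langMat, wordMat]

theorem langMat_mul (f : α → MPMat n) (L M : Language α) :
    langMat f (L * M) = mpMul (langMat f L) (langMat f M) := by
  funext i j
  simp only [langMat, mpMul, EReal.iSup_add, EReal.add_iSup]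
  refine le_antisymm (iSup₂_le fun u hu => ?_)
    (iSup_le fun k => iSup₂_le fun t ht => iSup₂_le fun s hs => ?_)
  · obtain ⟨s, hs, t, ht, rfl⟩ := Language.mem_mul.mp hu
    rw [wordMat_append]
    exact iSup_le fun k => le_iSup_of_le k (le_iSup₂_of_le t ht (le_iSup₂_of_le s hs le_rfl))
  · refine le_iSup₂_of_le (s ++ t) (Language.append_mem_mul hs ht) ?_
    rw [wordMat_append]
    exact le_iSup (fun k => wordMat f s i k + wordMat f t k j) k

theorem mpPow_langMat (f : α → MPMat n) (M : Language α) (k : ℕ) :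
    mpPow (langMat f M) k = langMat f (M ^ k) := by
  induction k with
  | zero => exact (langMat_one f).symm
  | succ k ih => rw [pow_succ', langMat_mul, ← ih]; rfl

def DiagNonpos (f : α → MPMat n) (M : Language α) : Prop :=
  ∀ s ∈ M, ∀ i, wordMat f s i i ≤ 0

variable {f : α → MPMat n} {L M : Language α}

theorem DiagNonpos.mono (h : DiagNonpos f M) (hLM : L ≤ M) : DiagNonpos f L :=
  fun s hs => h s (hLM hs)

theorem DiagNonpos.add (hL : DiagNonpos f L) (hM : DiagNonpos f M) : DiagNonpos f (L + M) :=
  fun s hs => ((Language.mem_add L M s).mp hs).elim (hL s) (hM s)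

theorem diagNonpos_one (f : α → MPMat n) : DiagNonpos f 1 := by
  rintro s rfl i
  simp [wordMat, mpId]

theorem inGamma_langMat_iff : InGamma (langMat f M) ↔ DiagNonpos f M∗ := by
  simp only [InGamma, mpPow_langMat]
  constructor
  · intro h s hs i
    obtain ⟨k, hk⟩ := Language.mem_iSup.mp (Language.kstar_eq_iSup_pow M ▸ hs)
    cases k with
    | zero => exact diagNonpos_one f s hk i
    | succ k => exact (le_iSup₂_of_le s hk le_rfl).trans (h i (k + 1) k.succ_pos)
  · exact fun h i k _ => iSup₂_le fun s hs => h s ((pow_le_kstar : M ^ k ≤ M∗) hs) i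

theorem DiagNonpos.mul_comm (h : DiagNonpos f (L * M)) : DiagNonpos f (M * L) := by
  intro u hu j
  obtain ⟨t, ht, s, hs, rfl⟩ := Language.mem_mul.mp hu
  by_contra! hpos
  obtain ⟨i, hi⟩ := exists_diag_pos_append_swap f hpos
  exact (h _ (Language.append_mem_mul hs ht) i).not_gt hi

theorem flatten_replicate_mem_kstar {s : List α} (hs : s ∈ L∗) (N : ℕ) :
    (List.replicate N s).flatten ∈ L∗ := by
  have hpow : (List.replicate N s).flatten ∈ L∗ ^ N :=
    Language.mem_pow.mpr
      ⟨_, rfl, List.length_replicate, fun y hy => List.eq_of_mem_replicate hy ▸ hs⟩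
  exact (pow_le_kstar.trans (kstar_idem L).le : L∗ ^ N ≤ L∗) hpow

theorem DiagNonpos.kstar_of_singleton_mul {t : List α} (ht : ∀ i, wordMat f t i i ≠ ⊥)
    (h : DiagNonpos f ({t} * L∗)) : DiagNonpos f L∗ := by
  intro s hs i
  by_contra! hpos
  obtain ⟨N, hN⟩ := EReal.exists_add_nsmul_pos (ht i) hpos
  refine (h _ (Language.append_mem_mul rfl (flatten_replicate_mem_kstar hs N)) i).not_gt ?_
  calc 0 < wordMat f t i i + N • wordMat f s i i := hN
    _ ≤ _ := (add_le_add le_rfl (nsmul_diag_le_wordMat_flatten_replicate f s i N)).trans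
      (diag_add_le_wordMat_append f _ _ i)

theorem stmt14_general {n : ℕ} (P I : MPMat n)
    (hPd : ∀ j, P j j ≠ ⊥) (L : Language Bool) :
    InGamma (langMat (mu2 P I) (({[true]} : Language Bool) + L)) ↔
    InGamma (langMat (mu2 P I) (({[true]} : Language Bool) * KStar.kstar L)) := by
  rw [inGamma_langMat_iff, inGamma_langMat_iff]
  refine ⟨fun h => h.mono (kstar_mul_kstar_le_kstar_add _ _), fun h => ?_⟩
  set B := ({[true]} : Language Bool) * L∗
  have hL : DiagNonpos (mu2 P I) L∗ :=
    (h.mono le_kstar).kstar_of_singleton_mul (t := [true])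
      (by simpa [wordMat_singleton, mu2] using hPd)
  have hLB : DiagNonpos (mu2 P I) (L∗ * B∗ * B) := by
    refine DiagNonpos.mul_comm (h.mono ?_)
    calc B * (L∗ * B∗) = B * B∗ := by
          rw [← mul_assoc, mul_assoc _ L∗ L∗, kstar_mul_kstar]
      _ ≤ B∗ := mul_kstar_le_kstar
  exact (hL.add hLB).mono (kstar_add_le _ _)

/-- if every diagonal entry of `P` is finite, then for any language
`L ⊆ {p, i}^*`, `G(μ({p} ∪ L)) ∈ Γ ↔ G(μ({p} · L^*)) ∈ Γ`. -/
theorem stmt14 {n : ℕ} (P I : MPMat n)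
    (hP : ∀ i j, P i j ≠ ⊤) (hI : ∀ i j, I i j ≠ ⊤)
    (hPd : ∀ j, P j j ≠ ⊥) (L : Language Bool) :
    InGamma (langMat (mu2 P I) (({[true]} : Language Bool) + L)) ↔
    InGamma (langMat (mu2 P I) (({[true]} : Language Bool) * KStar.kstar L)) :=
  stmt14_general P I hPd L

end NCP
end
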